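/- Let G be a finite edge-coloured graph with minimum degree δ(G) > 0, let k be a positive integer, and let 1 ≤ ℓ ≤ k. Then h_{2k}(ℓ, 2k)² ≤ h_{2k}(1, 2k) · h_{2k}(ℓ, 2k+1-ℓ). -/
import Mathlib


open SimpleGraph Finset
open scoped Classical

/-- The cyclic successor of an index `i : Fin m` (i.e. `i + 1` mod `m`). -/
def cyclicSucc {m : ℕ} (i : Fin m) : Fin m := ⟨(i.val + 1) % m, Nat.mod_lt _ i.pos⟩

/-- `u : Fin m → V` is a homomorphic cycle of length `m` in `G`: consecutive vertices
(cyclically, indices mod `m`) are adjacent. -/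
def IsHomCycle {V : Type} (G : SimpleGraph V) {m : ℕ} (u : Fin m → V) : Prop :=
  ∀ i : Fin m, G.Adj (u i) (u (cyclicSucc i))

/-- `h_m`: the sum of the weights `1/∏ᵢ d(uᵢ)` of all homomorphic cycles of length `m`
in `G`. -/
noncomputable def homCycleSum {V : Type} [Fintype V] (G : SimpleGraph V)
    [DecidableRel G.Adj] (m : ℕ) : ℝ :=
  ∑ u : Fin m → V, if IsHomCycle G u then ∏ i, ((G.degree (u i) : ℝ))⁻¹ else 0

/-- `h_m(a+1, b+1)` (edges indexed so that the `a`-th edge of the cycle is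
`u_a u_{a+1}`): the sum of the weights of the homomorphic `m`-cycles whose edges
`u_a u_{a+1}` and `u_b u_{b+1}` receive the same colour under `c`. -/
noncomputable def homCyclePairSum {V : Type} [Fintype V] (G : SimpleGraph V)
    [DecidableRel G.Adj] {β : Type} (c : Sym2 V → β) {m : ℕ} (a b : Fin m) : ℝ :=
  ∑ u : Fin m → V,
    if IsHomCycle G u ∧ c s(u a, u (cyclicSucc a)) = c s(u b, u (cyclicSucc b)) then
      ∏ i, ((G.degree (u i) : ℝ))⁻¹
    else 0

namespace HC

variable {V : Type} [Fintype V] (G : SimpleGraph V) [DecidableRel G.Adj]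

def IsWalk {k : ℕ} (p : Fin (k + 1) → V) : Prop :=
  ∀ i : Fin k, G.Adj (p i.castSucc) (p i.succ)

noncomputable def wt {k : ℕ} (p : Fin (k + 1) → V) : ℝ :=
  Real.sqrt (G.degree (p 0)) * Real.sqrt (G.degree (p (Fin.last k))) *
    ∏ i, ((G.degree (p i) : ℝ))⁻¹

variable {β : Type} (c : Sym2 V → β)

noncomputable def F {k : ℕ} (e : Fin k) (x y : V) (γ : β) : ℝ :=
  ∑ p : Fin (k + 1) → V,
    if IsWalk G p ∧ p 0 = x ∧ p (Fin.last k) = y ∧ c s(p e.castSucc, p e.succ) = γ then wt G p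
    else 0

def Glued {k : ℕ} (a a' : Fin k) (p q : Fin (k + 1) → V) : Prop :=
  IsWalk G p ∧ IsWalk G q ∧ q 0 = p 0 ∧ q (Fin.last k) = p (Fin.last k) ∧
    c s(p a.castSucc, p a.succ) = c s(q a'.castSucc, q a'.succ)

def toP {k : ℕ} (hk : 0 < k) (u : Fin (2 * k) → V) : Fin (k + 1) → V :=
  fun i => u ⟨i.val % (2 * k), Nat.mod_lt _ (by omega)⟩

def toQ {k : ℕ} (hk : 0 < k) (u : Fin (2 * k) → V) : Fin (k + 1) → V :=
  fun i => u ⟨(2 * k - i.val) % (2 * k), Nat.mod_lt _ (by omega)⟩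

def glue {k : ℕ} (hk : 0 < k) (p q : Fin (k + 1) → V) : Fin (2 * k) → V :=
  fun i => if h : i.val ≤ k then p ⟨i.val, by omega⟩ else q ⟨2 * k - i.val, by omega⟩

lemma ucongr {n : ℕ} (u : Fin n → V) {i j : Fin n} (h : i.val = j.val) : u i = u j :=
  congrArg u (Fin.ext h)

lemma rhs_collapse {k : ℕ} (a a' : Fin k) :
    ∑ t ∈ (univ ×ˢ univ) ×ˢ univ.image c,
        F G c a t.1.1 t.1.2 t.2 * F G c a' t.1.1 t.1.2 t.2 =
      ∑ p : Fin (k + 1) → V, ∑ q : Fin (k + 1) → V,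
        if Glued G c a a' p q then wt G p * wt G q else 0 := by
  simp only [F, Finset.sum_mul_sum]
  rw [Finset.sum_comm]
  refine Finset.sum_congr rfl fun p _ => ?_
  rw [Finset.sum_comm]
  refine Finset.sum_congr rfl fun q _ => ?_
  by_cases hg : Glued G c a a' p q
  · rw [if_pos hg]
    obtain ⟨hp, hq, h0, hl, hcol⟩ := hg
    rw [Finset.sum_eq_single (((p 0, p (Fin.last k)), c s(p a.castSucc, p a.succ)))]
    · split_ifs with h1 h2
      · rfl
      · exact absurd ⟨hq, h0, hl, hcol.symm⟩ h2
      · exact absurd ⟨hp, rfl, rfl, rfl⟩ h1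
      · exact absurd ⟨hp, rfl, rfl, rfl⟩ h1
    · rintro ⟨⟨x, y⟩, γ⟩ ht hne
      by_cases h1 : IsWalk G p ∧ p 0 = x ∧ p (Fin.last k) = y ∧ c s(p a.castSucc, p a.succ) = γ
      · exact absurd (by rw [← h1.2.1, ← h1.2.2.1, ← h1.2.2.2]) hne
      · rw [if_neg h1, zero_mul]
    · intro h
      exact absurd (Finset.mem_product.2 ⟨Finset.mem_product.2 ⟨mem_univ _, mem_univ _⟩,
        Finset.mem_image_of_mem c (mem_univ _)⟩) h
  · rw [if_neg hg]
    refine Finset.sum_eq_zero fun t _ => ?_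
    by_cases h1 : IsWalk G p ∧ p 0 = t.1.1 ∧ p (Fin.last k) = t.1.2 ∧
        c s(p a.castSucc, p a.succ) = t.2
    · by_cases h2 : IsWalk G q ∧ q 0 = t.1.1 ∧ q (Fin.last k) = t.1.2 ∧
          c s(q a'.castSucc, q a'.succ) = t.2
      · exact absurd ⟨h1.1, h2.1, by rw [h2.2.1, h1.2.1], by rw [h2.2.2.1, h1.2.2.1],
          by rw [h1.2.2.2, h2.2.2.2]⟩ hg
      · rw [if_neg h2, mul_zero]
    · rw [if_neg h1, zero_mul]

end HC

namespace HC

variable {V : Type} [Fintype V] (G : SimpleGraph V) [DecidableRel G.Adj]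

lemma wt_helper (k : ℕ) (d : ℕ → ℝ) (h0 : 0 < d 0) (hK : 0 < d k)
    (hper : d (2 * k) = d 0) :
    (Real.sqrt (d 0) * Real.sqrt (d k) * ∏ n ∈ range (k + 1), (d n)⁻¹) *
      (Real.sqrt (d 0) * Real.sqrt (d k) * ∏ n ∈ range (k + 1), (d (2 * k - n))⁻¹) =
    ∏ n ∈ range (2 * k), (d n)⁻¹ := by
  have e1 : ∏ n ∈ range (k + 1), (d n)⁻¹ = (∏ n ∈ range k, (d n)⁻¹) * (d k)⁻¹ :=
    Finset.prod_range_succ _ _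
  have e2 : ∏ n ∈ range (k + 1), (d (2 * k - n))⁻¹
      = (∏ n ∈ range k, (d (k + n))⁻¹) * (d 0)⁻¹ := by
    rw [Finset.prod_range_succ' (fun n => (d (2 * k - n))⁻¹) k]
    rw [show 2 * k - 0 = 2 * k from rfl, hper]
    congr 1
    rw [← Finset.prod_range_reflect (fun n => (d (k + n))⁻¹) k]
    refine Finset.prod_congr rfl fun i hi => ?_
    have hik : i < k := Finset.mem_range.1 hi
    have : 2 * k - (i + 1) = k + (k - 1 - i) := by omega
    rw [this]
  have e3 : ∏ n ∈ range (2 * k), (d n)⁻¹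
      = (∏ n ∈ range k, (d n)⁻¹) * ∏ n ∈ range k, (d (k + n))⁻¹ := by
    rw [two_mul, Finset.prod_range_add]
  rw [e1, e2, e3]
  have s0 : Real.sqrt (d 0) * Real.sqrt (d 0) = d 0 := Real.mul_self_sqrt h0.le
  have sk : Real.sqrt (d k) * Real.sqrt (d k) = d k := Real.mul_self_sqrt hK.le
  have key : d 0 * d k * (d 0)⁻¹ * (d k)⁻¹ = 1 := by field_simp
  calc (Real.sqrt (d 0) * Real.sqrt (d k) * ((∏ n ∈ range k, (d n)⁻¹) * (d k)⁻¹)) *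
      (Real.sqrt (d 0) * Real.sqrt (d k) * ((∏ n ∈ range k, (d (k + n))⁻¹) * (d 0)⁻¹))
      = (Real.sqrt (d 0) * Real.sqrt (d 0)) * (Real.sqrt (d k) * Real.sqrt (d k)) *
        (d 0)⁻¹ * (d k)⁻¹ *
        ((∏ n ∈ range k, (d n)⁻¹) * ∏ n ∈ range k, (d (k + n))⁻¹) := by ring
    _ = (d 0 * d k * (d 0)⁻¹ * (d k)⁻¹) *
        ((∏ n ∈ range k, (d n)⁻¹) * ∏ n ∈ range k, (d (k + n))⁻¹) := by rw [s0, sk]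
    _ = (∏ n ∈ range k, (d n)⁻¹) * ∏ n ∈ range k, (d (k + n))⁻¹ := by rw [key, one_mul]

lemma wt_mul_wt {k : ℕ} (hk : 0 < k) (hd : ∀ v : V, 0 < G.degree v) (u : Fin (2 * k) → V) :
    wt G (toP hk u) * wt G (toQ hk u) = ∏ i, ((G.degree (u i) : ℝ))⁻¹ := by
  set d : ℕ → ℝ := fun n => (G.degree (u ⟨n % (2 * k), Nat.mod_lt _ (by omega)⟩) : ℝ) with hdd
  have eP : wt G (toP hk u) = Real.sqrt (d 0) * Real.sqrt (d k) * ∏ n ∈ range (k + 1), (d n)⁻¹ := by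
    unfold wt
    congr 1
    exact Fin.prod_univ_eq_prod_range (fun n => (d n)⁻¹) (k + 1)
  have q0v : (2 * k - 0) % (2 * k) = 0 % (2 * k) := by
    simp [Nat.sub_zero, Nat.mod_self, Nat.zero_mod]
  have q0 : toQ hk u 0 = u ⟨0 % (2 * k), Nat.mod_lt _ (by omega)⟩ := ucongr u q0v
  have qlv : (2 * k - (Fin.last k).val) % (2 * k) = k % (2 * k) := by
    rw [Fin.val_last]
    congr 1
    omega
  have ql : toQ hk u (Fin.last k) = u ⟨k % (2 * k), Nat.mod_lt _ (by omega)⟩ := ucongr u qlv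
  have eQ : wt G (toQ hk u) =
      Real.sqrt (d 0) * Real.sqrt (d k) * ∏ n ∈ range (k + 1), (d (2 * k - n))⁻¹ := by
    unfold wt
    rw [q0, ql]
    congr 1
    exact Fin.prod_univ_eq_prod_range (fun n => (d (2 * k - n))⁻¹) (k + 1)
  have eR : ∏ i : Fin (2 * k), ((G.degree (u i) : ℝ))⁻¹ = ∏ n ∈ range (2 * k), (d n)⁻¹ := by
    rw [← Fin.prod_univ_eq_prod_range (fun n => (d n)⁻¹) (2 * k)]
    refine Finset.prod_congr rfl fun i _ => ?_
    have : u i = u ⟨i.val % (2 * k), Nat.mod_lt _ (by omega)⟩ :=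
      ucongr u (Nat.mod_eq_of_lt i.isLt).symm
    rw [this]
  have h0 : 0 < d 0 := by rw [hdd]; simp only []; exact_mod_cast hd _
  have hK : 0 < d k := by rw [hdd]; simp only []; exact_mod_cast hd _
  have hper : d (2 * k) = d 0 := by
    exact congrArg (fun v => ((G.degree v : ℝ))) (ucongr u (by simp [Nat.mod_self]))
  rw [eP, eQ, eR]
  exact wt_helper k d h0 hK hper

end HC

namespace HC

variable {V : Type} [Fintype V] (G : SimpleGraph V) [DecidableRel G.Adj] {β : Type} (c : Sym2 V → β)

lemma cycle_iff {k : ℕ} (hk : 0 < k) (u : Fin (2 * k) → V) :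
    IsHomCycle G u ↔ IsWalk G (toP hk u) ∧ IsWalk G (toQ hk u) := by
  constructor
  · intro hu
    constructor
    · intro i
      have h := hu ⟨i.val, by omega⟩
      have e1 : toP hk u i.castSucc = u ⟨i.val, by omega⟩ :=
        ucongr u (by simp only [toP, Fin.coe_castSucc]; exact Nat.mod_eq_of_lt (by omega))
      have e2 : toP hk u i.succ = u (cyclicSucc ⟨i.val, by omega⟩) :=
        ucongr u (by simp only [toP, Fin.val_succ, cyclicSucc])
      rw [e1, e2]; exact h
    · intro i
      have h := (hu ⟨2 * k - 1 - i.val, by omega⟩).symm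
      have e1 : toQ hk u i.castSucc = u (cyclicSucc ⟨2 * k - 1 - i.val, by omega⟩) :=
        ucongr u (by
          simp only [toQ, Fin.coe_castSucc, cyclicSucc]
          congr 1
          omega)
      have e2 : toQ hk u i.succ = u ⟨2 * k - 1 - i.val, by omega⟩ :=
        ucongr u (by
          simp only [toQ, Fin.val_succ]
          rw [Nat.mod_eq_of_lt (by omega)]
          omega)
      rw [e1, e2]; exact h
  · rintro ⟨hp, hq⟩ i
    by_cases hc : i.val < k
    · have h := hp ⟨i.val, hc⟩
      have e1 : toP hk u (Fin.castSucc ⟨i.val, hc⟩) = u i :=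
        ucongr u (by simp only [toP, Fin.coe_castSucc]; exact Nat.mod_eq_of_lt (by omega))
      have e2 : toP hk u (Fin.succ ⟨i.val, hc⟩) = u (cyclicSucc i) :=
        ucongr u (by simp only [toP, Fin.val_succ, cyclicSucc])
      rwa [e1, e2] at h
    · have h := (hq ⟨2 * k - 1 - i.val, by omega⟩).symm
      have e1 : toQ hk u (Fin.succ ⟨2 * k - 1 - i.val, by omega⟩) = u i :=
        ucongr u (by
          simp only [toQ, Fin.val_succ]
          rw [show 2 * k - (2 * k - 1 - i.val + 1) = i.val by omega]
          exact Nat.mod_eq_of_lt i.isLt)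
      have e2 : toQ hk u (Fin.castSucc ⟨2 * k - 1 - i.val, by omega⟩) = u (cyclicSucc i) :=
        ucongr u (by
          simp only [toQ, Fin.coe_castSucc, cyclicSucc]
          congr 1
          omega)
      rwa [e1, e2] at h

lemma colP {k : ℕ} (hk : 0 < k) (a : ℕ) (ha : a < k) (u : Fin (2 * k) → V) :
    s(toP hk u (Fin.castSucc ⟨a, ha⟩), toP hk u (Fin.succ ⟨a, ha⟩))
      = s(u ⟨a, by omega⟩, u (cyclicSucc ⟨a, by omega⟩)) := by
  have e1 : toP hk u (Fin.castSucc ⟨a, ha⟩) = u ⟨a, by omega⟩ :=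
    ucongr u (by simp only [toP, Fin.coe_castSucc]; exact Nat.mod_eq_of_lt (by omega))
  have e2 : toP hk u (Fin.succ ⟨a, ha⟩) = u (cyclicSucc ⟨a, by omega⟩) :=
    ucongr u (by simp only [toP, Fin.val_succ, cyclicSucc])
  rw [e1, e2]

lemma colQ {k : ℕ} (hk : 0 < k) (a' : ℕ) (ha' : a' < k) (u : Fin (2 * k) → V) :
    s(toQ hk u (Fin.castSucc ⟨a', ha'⟩), toQ hk u (Fin.succ ⟨a', ha'⟩))
      = s(u ⟨2 * k - 1 - a', by omega⟩, u (cyclicSucc ⟨2 * k - 1 - a', by omega⟩)) := by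
  have e1 : toQ hk u (Fin.castSucc ⟨a', ha'⟩) = u (cyclicSucc ⟨2 * k - 1 - a', by omega⟩) :=
    ucongr u (by
      simp only [toQ, Fin.coe_castSucc, cyclicSucc]
      congr 1
      omega)
  have e2 : toQ hk u (Fin.succ ⟨a', ha'⟩) = u ⟨2 * k - 1 - a', by omega⟩ :=
    ucongr u (by
      simp only [toQ, Fin.val_succ]
      rw [Nat.mod_eq_of_lt (by omega)]
      omega)
  rw [e1, e2, Sym2.eq_swap]

end HC

namespace HC

variable {V : Type} [Fintype V] (G : SimpleGraph V) [DecidableRel G.Adj] {β : Type} (c : Sym2 V → β)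

lemma glue_low {k : ℕ} (hk : 0 < k) (p q : Fin (k + 1) → V) (i : Fin (2 * k))
    (h : i.val ≤ k) : glue hk p q i = p ⟨i.val, by omega⟩ := dif_pos h

lemma glue_high {k : ℕ} (hk : 0 < k) (p q : Fin (k + 1) → V) (i : Fin (2 * k))
    (h : ¬ i.val ≤ k) : glue hk p q i = q ⟨2 * k - i.val, by omega⟩ := dif_neg h

lemma toP_glue {k : ℕ} (hk : 0 < k) (p q : Fin (k + 1) → V) :
    toP hk (glue hk p q) = p := by
  funext i
  have hi : i.val ≤ k := by omega
  have e : toP hk (glue hk p q) i = glue hk p q ⟨i.val % (2 * k), Nat.mod_lt _ (by omega)⟩ := rfl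
  rw [e, glue_low hk p q _ (by simp only [Nat.mod_eq_of_lt (show i.val < 2 * k by omega)]; exact hi)]
  exact ucongr p (by simp only [Nat.mod_eq_of_lt (show i.val < 2 * k by omega)])

lemma toQ_glue {k : ℕ} (hk : 0 < k) (p q : Fin (k + 1) → V)
    (h0 : q 0 = p 0) (hl : q (Fin.last k) = p (Fin.last k)) :
    toQ hk (glue hk p q) = q := by
  funext i
  have e : toQ hk (glue hk p q) i
      = glue hk p q ⟨(2 * k - i.val) % (2 * k), Nat.mod_lt _ (by omega)⟩ := rfl
  by_cases hz : i.val = 0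
  · have hv : (2 * k - i.val) % (2 * k) = 0 := by rw [hz]; simp [Nat.mod_self]
    rw [e, glue_low hk p q _ (by show (2 * k - i.val) % (2 * k) ≤ k; rw [hv]; omega)]
    have : p ⟨(2 * k - i.val) % (2 * k), by omega⟩ = p 0 :=
      ucongr p (by show (2 * k - i.val) % (2 * k) = (0 : Fin (k + 1)).val; rw [hv]; rfl)
    rw [this, ← h0]
    exact (ucongr q (by simp [hz])).symm
  · have hv : (2 * k - i.val) % (2 * k) = 2 * k - i.val :=
      Nat.mod_eq_of_lt (by omega)
    by_cases hkk : i.val = k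
    · rw [e, glue_low hk p q _ (by show (2 * k - i.val) % (2 * k) ≤ k; rw [hv]; omega)]
      have : p ⟨(2 * k - i.val) % (2 * k), by omega⟩ = p (Fin.last k) :=
        ucongr p (by show (2 * k - i.val) % (2 * k) = (Fin.last k).val
                     rw [hv, Fin.val_last]; omega)
      rw [this, ← hl]
      exact (ucongr q (by rw [Fin.val_last]; omega)).symm
    · have hik : i.val < k := by omega
      rw [e, glue_high hk p q _ (by show ¬ (2 * k - i.val) % (2 * k) ≤ k; rw [hv]; omega)]
      exact ucongr q (by show 2 * k - (2 * k - i.val) % (2 * k) = i.val; rw [hv]; omega)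

lemma E_inj {k : ℕ} (hk : 0 < k) (x y : Fin (2 * k) → V)
    (hP : toP hk x = toP hk y) (hQ : toQ hk x = toQ hk y) : x = y := by
  funext i
  by_cases h : i.val ≤ k
  · have := congrFun hP ⟨i.val, by omega⟩
    have ex : toP hk x ⟨i.val, by omega⟩ = x i := ucongr x (Nat.mod_eq_of_lt (by omega))
    have ey : toP hk y ⟨i.val, by omega⟩ = y i := ucongr y (Nat.mod_eq_of_lt (by omega))
    rwa [ex, ey] at this
  · have := congrFun hQ ⟨2 * k - i.val, by omega⟩
    have hv : (2 * k - (2 * k - i.val)) % (2 * k) = i.val := by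
      rw [show 2 * k - (2 * k - i.val) = i.val by omega]
      exact Nat.mod_eq_of_lt i.isLt
    have ex : toQ hk x ⟨2 * k - i.val, by omega⟩ = x i := ucongr x hv
    have ey : toQ hk y ⟨2 * k - i.val, by omega⟩ = y i := ucongr y hv
    rwa [ex, ey] at this

end HC

namespace HC

variable {V : Type} [Fintype V] (G : SimpleGraph V) [DecidableRel G.Adj] {β : Type} (c : Sym2 V → β)

lemma glued_iff {k : ℕ} (hk : 0 < k) (a a' b : ℕ) (ha : a < k) (ha' : a' < k)
    (hb : b = 2 * k - 1 - a') (u : Fin (2 * k) → V) :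
    (IsHomCycle G u ∧ c s(u ⟨a, by omega⟩, u (cyclicSucc ⟨a, by omega⟩))
        = c s(u ⟨b, by omega⟩, u (cyclicSucc ⟨b, by omega⟩)))
      ↔ Glued G c ⟨a, ha⟩ ⟨a', ha'⟩ (toP hk u) (toQ hk u) := by
  subst hb
  have g0 : toQ hk u 0 = toP hk u 0 :=
    ucongr u (by show (2 * k - (0 : Fin (k+1)).val) % (2 * k) = ((0:Fin (k+1)).val) % (2 * k)
                 simp [Nat.mod_self])
  have gl : toQ hk u (Fin.last k) = toP hk u (Fin.last k) :=
    ucongr u (by show (2 * k - (Fin.last k).val) % (2 * k) = ((Fin.last k).val) % (2 * k)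
                 rw [Fin.val_last]
                 congr 1
                 omega)
  constructor
  · rintro ⟨hcyc, hcol⟩
    obtain ⟨hp, hq⟩ := (cycle_iff G hk u).1 hcyc
    refine ⟨hp, hq, g0, gl, ?_⟩
    rw [colP hk a ha u, colQ hk a' ha' u]
    exact hcol
  · rintro ⟨hp, hq, _, _, hcol⟩
    refine ⟨(cycle_iff G hk u).2 ⟨hp, hq⟩, ?_⟩
    rw [← colP hk a ha u, ← colQ hk a' ha' u]
    exact hcol

lemma split {k : ℕ} (hk : 0 < k) (hd : ∀ v : V, 0 < G.degree v) (a a' b : ℕ)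
    (ha : a < k) (ha' : a' < k) (hb : b = 2 * k - 1 - a') :
    homCyclePairSum G c (m := 2 * k) ⟨a, by omega⟩ ⟨b, by omega⟩ =
      ∑ t ∈ (univ ×ˢ univ) ×ˢ univ.image c,
        F G c ⟨a, ha⟩ t.1.1 t.1.2 t.2 * F G c ⟨a', ha'⟩ t.1.1 t.1.2 t.2 := by
  rw [rhs_collapse]
  symm
  rw [← Fintype.sum_prod_type']
  have hsub : ∀ pq ∈ (univ : Finset ((Fin (k+1) → V) × (Fin (k+1) → V))),
      pq ∉ univ.image (fun u : Fin (2 * k) → V => (toP hk u, toQ hk u)) →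
      (if Glued G c ⟨a, ha⟩ ⟨a', ha'⟩ pq.1 pq.2 then wt G pq.1 * wt G pq.2 else 0) = 0 := by
    rintro ⟨p, q⟩ _ hno
    rw [if_neg]
    rintro ⟨_, _, h0, hl, _⟩
    exact hno (Finset.mem_image.2 ⟨glue hk p q, Finset.mem_univ _,
      by rw [Prod.mk.injEq]; exact ⟨toP_glue hk p q, toQ_glue hk p q h0 hl⟩⟩)
  rw [← Finset.sum_subset (Finset.subset_univ _) hsub]
  rw [Finset.sum_image (fun x _ y _ h => E_inj hk x y
    (congrArg Prod.fst h) (congrArg Prod.snd h))]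
  refine Finset.sum_congr rfl fun u _ => ?_
  exact if_congr ((glued_iff G c hk a a' b ha ha' hb u).symm) (wt_mul_wt G hk hd u) rfl

end HC


/-- For a finite edge-coloured graph `G` with `δ(G) > 0` and `1 ≤ ℓ ≤ k`:
`h_{2k}(ℓ, 2k)² ≤ h_{2k}(1, 2k) · h_{2k}(ℓ, 2k+1-ℓ)`. (Here `h_{2k}(i, j)` compares the
colours of the edges `u_{i-1} u_i` and `u_{j-1} u_j`, so it corresponds to
`homCyclePairSum` with `0`-based edge indices `i-1` and `j-1`.) -/
theorem homCyclePairSum_sq_le {V : Type} [Fintype V] (G : SimpleGraph V)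
    [DecidableRel G.Adj] (hδ : 0 < G.minDegree) {β : Type} (c : Sym2 V → β)
    (k ℓ : ℕ) (hk : 0 < k) (hℓ1 : 1 ≤ ℓ) (hℓk : ℓ ≤ k) :
    homCyclePairSum G c (m := 2 * k) ⟨ℓ - 1, by omega⟩ ⟨2 * k - 1, by omega⟩ ^ 2 ≤
      homCyclePairSum G c (m := 2 * k) ⟨0, by omega⟩ ⟨2 * k - 1, by omega⟩ *
      homCyclePairSum G c (m := 2 * k) ⟨ℓ - 1, by omega⟩ ⟨2 * k - ℓ, by omega⟩ := by
  classical
  have hd : ∀ v : V, 0 < G.degree v := fun v =>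
    lt_of_lt_of_le hδ (G.minDegree_le_degree v)
  have h1 := HC.split G c hk hd (ℓ - 1) 0 (2 * k - 1) (by omega) (by omega) (by omega)
  have h2 := HC.split G c hk hd 0 0 (2 * k - 1) (by omega) (by omega) (by omega)
  have h3 := HC.split G c hk hd (ℓ - 1) (ℓ - 1) (2 * k - ℓ) (by omega) (by omega) (by omega)
  rw [h1, h2, h3]
  have CS := Finset.sum_mul_sq_le_sq_mul_sq ((univ ×ˢ univ) ×ˢ univ.image c)
    (fun t : (V × V) × β => HC.F G c (⟨ℓ - 1, by omega⟩ : Fin k) t.1.1 t.1.2 t.2)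
    (fun t : (V × V) × β => HC.F G c (⟨0, by omega⟩ : Fin k) t.1.1 t.1.2 t.2)
  refine le_trans CS (le_of_eq ?_)
  rw [mul_comm]
  congr 1 <;> exact Finset.sum_congr rfl fun t _ => (pow_two _)
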